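/- arXiv:1808.09669 — 5 statements merged into one kernel-verified Lean document; each statement's English description precedes it below -/
import Mathlib

section
/- Let x_1, ..., x_n be positive real numbers such that their sum equals n and the sum of (x_i - 1)^2 equals δ with δ ≤ 1. Then the product of the x_i is at most exp(-δ/6). -/
/-!
Since `log x ≤ (x - 1) - (x - 1)² / 6` on `(0, 2]`, summing over the `xᵢ` (which lie in `(0, 2]`
because each `(xᵢ - 1)² ≤ δ ≤ 1`) gives `∑ log xᵢ ≤ (∑ xᵢ - n) - δ / 6 = -δ / 6`.
-/

open Real Finset

namespace Real

/-- From `log x ≤ 2 (√x - 1)`, the bound reduces to `(√x - 1)² (6 - (√x + 1)²) ≥ 0`. -/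
lemma log_le_sub_one_sub_sq_div_six {x : ℝ} (hx : 0 < x) (hx2 : x ≤ 2) :
    log x ≤ (x - 1) - (x - 1) ^ 2 / 6 := by
  obtain ⟨s, hs, rfl⟩ : ∃ s, 0 < s ∧ s ^ 2 = x := ⟨√x, sqrt_pos.2 hx, sq_sqrt hx.le⟩
  have hlog : log (s ^ 2) ≤ 2 * (s - 1) := by
    rw [log_pow]
    push_cast
    linarith [log_le_sub_one_of_pos hs]
  have hs6 : (s + 1) ^ 2 ≤ 6 := by nlinarith
  have key : 0 ≤ (s - 1) ^ 2 * (6 - (s + 1) ^ 2) := mul_nonneg (sq_nonneg _) (by linarith)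
  nlinarith

lemma le_exp_sub_one_sub_sq_div_six {x : ℝ} (hx : 0 < x) (hx2 : x ≤ 2) :
    x ≤ exp ((x - 1) - (x - 1) ^ 2 / 6) :=
  (log_le_iff_le_exp hx).1 (log_le_sub_one_sub_sq_div_six hx hx2)

end Real

lemma Finset.prod_le_exp_sum_sub_sq_div_six {ι : Type*} (s : Finset ι) {x : ι → ℝ}
    (hpos : ∀ i ∈ s, 0 < x i) (hle : ∀ i ∈ s, x i ≤ 2) :
    ∏ i ∈ s, x i ≤ exp ((∑ i ∈ s, x i - #s) - (∑ i ∈ s, (x i - 1) ^ 2) / 6) := by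
  calc ∏ i ∈ s, x i
      ≤ ∏ i ∈ s, exp ((x i - 1) - (x i - 1) ^ 2 / 6) :=
        prod_le_prod (fun i hi => (hpos i hi).le)
          fun i hi => le_exp_sub_one_sub_sq_div_six (hpos i hi) (hle i hi)
    _ = exp ((∑ i ∈ s, x i - #s) - (∑ i ∈ s, (x i - 1) ^ 2) / 6) := by
        rw [← exp_sum, sum_sub_distrib, sum_sub_distrib, ← sum_div]
        simp

theorem robust_amgm (n : ℕ) (x : Fin n → ℝ) (δ : ℝ)
    (hpos : ∀ i, 0 < x i)
    (hsum : ∑ i, x i = (n : ℝ))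
    (hdist : ∑ i, (x i - 1) ^ 2 = δ)
    (hδ : δ ≤ 1) :
    ∏ i, x i ≤ Real.exp (-δ / 6) := by
  have hle : ∀ i, x i ≤ 2 := fun i => by
    have : (x i - 1) ^ 2 ≤ δ :=
      hdist ▸ single_le_sum (fun j _ => sq_nonneg (x j - 1)) (mem_univ i)
    nlinarith
  have h := prod_le_exp_sum_sub_sq_div_six univ (fun i _ => hpos i) (fun i _ => hle i)
  rwa [hsum, hdist, card_univ, Fintype.card_fin, sub_self, zero_sub, ← neg_div] at h
end

section
/- Let M be an n×n complex matrix such that M Mᵀconjugate = c·I_n for some c > 0 (i.e., M is a positive scalar multiple of a unitary matrix). Then for all A, B ∈ SL(n, ℂ), the Frobenius norm of A M Bᵀ is at least the Frobenius norm of M. -/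
open Matrix

/-- The Frobenius norm of a complex matrix. -/
noncomputable def frobeniusNorm {n : ℕ} (X : Matrix (Fin n) (Fin n) ℂ) : ℝ :=
  Real.sqrt (∑ i, ∑ j, ‖X i j‖ ^ 2)

/-!
The squared Frobenius norm of `X` is the trace of the positive semidefinite matrix `X Xᴴ`, whose
determinant is `|det X|²`. AM-GM on the eigenvalues of `X Xᴴ` gives `|det X|² ≤ (‖X‖_F² / n) ^ n`,
an inequality which is an equality for `X = M` when `M Mᴴ = c • 1`. Since `SL(n) × SL(n)` does not
change the determinant, `‖M‖_F² = n c ≤ ‖A M Bᵀ‖_F²`.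
-/

open Finset in
theorem Real.prod_le_sum_div_card_pow {ι : Type*} (s : Finset ι) (z : ι → ℝ)
    (hz : ∀ i ∈ s, 0 ≤ z i) : ∏ i ∈ s, z i ≤ ((∑ i ∈ s, z i) / #s) ^ #s := by
  rcases s.eq_empty_or_nonempty with rfl | hs
  · simp
  have hcard : (0 : ℝ) < #s := by exact_mod_cast hs.card_pos
  have amgm := Real.geom_mean_le_arith_mean s (fun _ ↦ 1) z (fun _ _ ↦ zero_le_one)
    (by simpa using hcard) hz
  simp only [Real.rpow_one, sum_const, nsmul_eq_mul, mul_one, one_mul] at amgm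
  calc ∏ i ∈ s, z i = ((∏ i ∈ s, z i) ^ (#s : ℝ)⁻¹) ^ #s :=
        (Real.rpow_inv_natCast_pow (prod_nonneg hz) hs.card_ne_zero).symm
    _ ≤ ((∑ i ∈ s, z i) / #s) ^ #s := by gcongr; exact Real.rpow_nonneg (prod_nonneg hz) _

namespace Matrix

open scoped ComplexOrder

variable {𝕜 ι κ : Type*} [RCLike 𝕜] [Fintype ι] [Fintype κ]

theorem sum_sum_norm_sq_eq_re_trace_mul_conjTranspose (X : Matrix ι κ 𝕜) :
    ∑ i, ∑ j, ‖X i j‖ ^ 2 = RCLike.re (X * Xᴴ).trace := by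
  simp only [trace, diag_apply, mul_apply, conjTranspose_apply, RCLike.star_def,
    RCLike.mul_conj, map_sum]
  norm_cast

theorem det_mul_conjTranspose_self [DecidableEq ι] (X : Matrix ι ι 𝕜) :
    (X * Xᴴ).det = ((‖X.det‖ ^ 2 : ℝ) : 𝕜) := by
  rw [det_mul, det_conjTranspose, RCLike.star_def, RCLike.mul_conj]
  norm_cast

theorem PosSemidef.re_det_le_re_trace_div_card_pow [DecidableEq ι] {P : Matrix ι ι 𝕜}
    (hP : P.PosSemidef) :
    RCLike.re P.det ≤ (RCLike.re P.trace / Fintype.card ι) ^ Fintype.card ι := by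
  rw [hP.1.det_eq_prod_eigenvalues, hP.1.trace_eq_sum_eigenvalues, ← RCLike.ofReal_prod,
    ← RCLike.ofReal_sum, RCLike.ofReal_re, RCLike.ofReal_re]
  exact Real.prod_le_sum_div_card_pow _ _ fun i _ ↦ hP.eigenvalues_nonneg i

theorem norm_det_sq_le_sum_sum_norm_sq_div_card_pow [DecidableEq ι] (X : Matrix ι ι 𝕜) :
    ‖X.det‖ ^ 2 ≤ ((∑ i, ∑ j, ‖X i j‖ ^ 2) / Fintype.card ι) ^ Fintype.card ι := by
  have := (posSemidef_self_mul_conjTranspose X).re_det_le_re_trace_div_card_pow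
  rwa [det_mul_conjTranspose_self, RCLike.ofReal_re,
    ← sum_sum_norm_sq_eq_re_trace_mul_conjTranspose] at this

end Matrix

theorem kempf_ness_minimality_general {n : ℕ} (M : Matrix (Fin n) (Fin n) ℂ) (c : ℝ)
    (hM : M * Mᴴ = (c : ℂ) • (1 : Matrix (Fin n) (Fin n) ℂ)) :
    ∀ A B : Matrix (Fin n) (Fin n) ℂ, A.det = 1 → B.det = 1 →
      frobeniusNorm M ≤ frobeniusNorm (A * M * Bᵀ) := by
  intro A B hA hB
  set X := A * M * Bᵀ
  have hdet : X.det = M.det := by simp [X, det_mul, hA, hB]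
  have hnormM : ∑ i, ∑ j, ‖M i j‖ ^ 2 = n * c := by
    rw [sum_sum_norm_sq_eq_re_trace_mul_conjTranspose, hM]
    simp [mul_comm]
  have hdetM : ‖M.det‖ ^ 2 = c ^ n := by
    have := congrArg det hM
    rw [det_mul_conjTranspose_self, det_smul, det_one, mul_one, Fintype.card_fin] at this
    exact_mod_cast RCLike.ofReal_injective (K := ℂ) (by simpa using this)
  have key : c ^ n ≤ ((∑ i, ∑ j, ‖X i j‖ ^ 2) / n) ^ n := by
    simpa [← hdetM, hdet] using norm_det_sq_le_sum_sum_norm_sq_div_card_pow X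
  refine Real.sqrt_le_sqrt ?_
  rw [hnormM]
  rcases n.eq_zero_or_pos with rfl | hn
  · simp
  rw [mul_comm, ← le_div_iff₀ (by positivity)]
  exact le_of_pow_le_pow_left₀ hn.ne' (by positivity) key

theorem kempf_ness_minimality {n : ℕ} (M : Matrix (Fin n) (Fin n) ℂ) (c : ℝ)
    (hc : 0 < c) (hM : M * Mᴴ = (c : ℂ) • (1 : Matrix (Fin n) (Fin n) ℂ)) :
    ∀ A B : Matrix (Fin n) (Fin n) ℂ, A.det = 1 → B.det = 1 →
      frobeniusNorm M ≤ frobeniusNorm (A * M * Bᵀ) :=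
  kempf_ness_minimality_general M c hM
end

section
/- Let A = (A_1, ..., A_m) be a tuple of n×n complex matrices with Σ_i A_i A_i^† = Σ_i A_i^† A_i = I_n (doubly stochastic tuple). Then for every subspace V ⊆ ℂ^n, dim(Σ_{i=1}^m A_i(V)) ≥ dim(V), where A_i(V) = {A_i v : v ∈ V} and the sum of subspaces is their span. -/
/-!
Let `e_j` be an orthonormal basis of `V` and `w_l` one of `W = ∑ i, A_i V`. Since
`∑ A_iᴴ A_i = 1`, `dim V = ∑_j ‖e_j‖² = ∑_{i,j} ‖A_i e_j‖²`. As `A_i e_j ∈ W`, Parseval in `W`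
turns this into `∑_{i,j,l} |⟪e_j, A_iᴴ w_l⟫|²`, which by Bessel's inequality for the `e_j` is at
most `∑_{i,l} ‖A_iᴴ w_l‖² = ∑_l ‖w_l‖² = dim W`, now using `∑ A_i A_iᴴ = 1`.
-/

open Matrix

open scoped InnerProductSpace

theorem Submodule.map_iSup_map_of_comp_eq {ι R M M' N N' : Type*} [Semiring R]
    [AddCommMonoid M] [Module R M] [AddCommMonoid M'] [Module R M']
    [AddCommMonoid N] [Module R N] [AddCommMonoid N'] [Module R N']
    {e : M →ₗ[R] N} {e' : M' →ₗ[R] N'} {f : ι → M →ₗ[R] M'} {g : ι → N →ₗ[R] N'}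
    (h : ∀ i, e' ∘ₗ f i = g i ∘ₗ e) (V : Submodule R M) :
    (⨆ i, V.map (f i)).map e' = ⨆ i, (V.map e).map (g i) := by
  rw [Submodule.map_iSup]
  refine iSup_congr fun i => ?_
  rw [← Submodule.map_comp, ← Submodule.map_comp, h]

section InnerProductSpace

variable {ι 𝕜 E F : Type*} [Fintype ι] [RCLike 𝕜]
  [NormedAddCommGroup E] [InnerProductSpace 𝕜 E]
  [NormedAddCommGroup F] [InnerProductSpace 𝕜 F]

theorem Submodule.sum_sq_norm_inner_left_of_mem {K : Submodule 𝕜 F} {κ : Type*} [Fintype κ]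
    (b : OrthonormalBasis κ 𝕜 K) {x : F} (hx : x ∈ K) :
    ∑ l, ‖⟪x, (b l : F)⟫_𝕜‖ ^ 2 = ‖x‖ ^ 2 :=
  b.sum_sq_norm_inner_left ⟨x, hx⟩

variable [FiniteDimensional 𝕜 E] [FiniteDimensional 𝕜 F]

theorem LinearMap.sum_norm_sq_apply_eq_of_sum_adjoint_comp_self {f : ι → E →ₗ[𝕜] F}
    (h : ∑ i, (f i).adjoint ∘ₗ f i = LinearMap.id) (x : E) :
    ∑ i, ‖f i x‖ ^ 2 = ‖x‖ ^ 2 :=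
  calc ∑ i, ‖f i x‖ ^ 2 = RCLike.re ⟪x, (∑ i, (f i).adjoint ∘ₗ f i) x⟫_𝕜 := by
        simp [LinearMap.sum_apply, inner_sum, LinearMap.adjoint_inner_right]
    _ = ‖x‖ ^ 2 := by rw [h, LinearMap.id_apply, inner_self_eq_norm_sq]

theorem Submodule.finrank_le_finrank_iSup_map {f : ι → E →ₗ[𝕜] F}
    (h₁ : ∑ i, f i ∘ₗ (f i).adjoint = LinearMap.id)
    (h₂ : ∑ i, (f i).adjoint ∘ₗ f i = LinearMap.id) (V : Submodule 𝕜 E) :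
    Module.finrank 𝕜 V ≤ Module.finrank 𝕜 (⨆ i, V.map (f i) : Submodule 𝕜 F) := by
  set W := ⨆ i, V.map (f i)
  let e := stdOrthonormalBasis 𝕜 V
  let w := stdOrthonormalBasis 𝕜 W
  have he : Orthonormal 𝕜 fun j => (e j : E) := e.orthonormal.comp_linearIsometry V.subtypeₗᵢ
  have hmem : ∀ i j, f i (e j) ∈ W := fun i j =>
    le_iSup (fun i => V.map (f i)) i (Submodule.mem_map_of_mem (e j).2)
  have h₁' : ∑ i, (f i).adjoint.adjoint ∘ₗ (f i).adjoint = LinearMap.id := by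
    simpa only [LinearMap.adjoint_adjoint] using h₁
  suffices (Module.finrank 𝕜 V : ℝ) ≤ Module.finrank 𝕜 W by exact_mod_cast this
  calc (Module.finrank 𝕜 V : ℝ)
      = ∑ j, ‖(e j : E)‖ ^ 2 := by
        simp [Submodule.norm_coe, -Submodule.coe_norm, e.norm_eq_one]
    _ = ∑ i, ∑ j, ‖f i (e j)‖ ^ 2 := by
        rw [Finset.sum_comm]
        simp only [LinearMap.sum_norm_sq_apply_eq_of_sum_adjoint_comp_self h₂]
    _ = ∑ i, ∑ l, ∑ j, ‖⟪(e j : E), (f i).adjoint (w l)⟫_𝕜‖ ^ 2 := by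
        refine Finset.sum_congr rfl fun i _ => ?_
        rw [Finset.sum_comm]
        refine Finset.sum_congr rfl fun j _ => ?_
        simp only [LinearMap.adjoint_inner_right,
          Submodule.sum_sq_norm_inner_left_of_mem w (hmem i j)]
    _ ≤ ∑ i, ∑ l, ‖(f i).adjoint (w l)‖ ^ 2 := by
        gcongr
        exact he.sum_inner_products_le _
    _ = ∑ l, ‖(w l : F)‖ ^ 2 := by
        rw [Finset.sum_comm]
        exact Finset.sum_congr rfl fun l _ =>
          LinearMap.sum_norm_sq_apply_eq_of_sum_adjoint_comp_self h₁' _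
    _ = Module.finrank 𝕜 W := by
        simp [Submodule.norm_coe, -Submodule.coe_norm, w.norm_eq_one]

end InnerProductSpace

theorem doublyStochastic_dim_nondecreasing {n m : ℕ} (A : Fin m → Matrix (Fin n) (Fin n) ℂ)
    (h1 : ∑ i, A i * (A i)ᴴ = 1) (h2 : ∑ i, (A i)ᴴ * A i = 1) :
    ∀ V : Submodule ℂ (Fin n → ℂ),
      Module.finrank ℂ V ≤
        Module.finrank ℂ (⨆ i, V.map (Matrix.toLin' (A i)) : Submodule ℂ (Fin n → ℂ)) := by
  intro V
  -- `toLin'` acts on `Fin n → ℂ`, which carries the sup norm; move to `EuclideanSpace`.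
  let e : (Fin n → ℂ) ≃ₗ[ℂ] EuclideanSpace ℂ (Fin n) := (WithLp.linearEquiv 2 ℂ _).symm
  have h₁ : ∑ i, toEuclideanLin (A i) ∘ₗ (toEuclideanLin (A i)).adjoint = LinearMap.id := by
    simpa [← toEuclideanLin_conjTranspose_eq_adjoint] using congrArg toEuclideanLin h1
  have h₂ : ∑ i, (toEuclideanLin (A i)).adjoint ∘ₗ toEuclideanLin (A i) = LinearMap.id := by
    simpa [← toEuclideanLin_conjTranspose_eq_adjoint] using congrArg toEuclideanLin h2
  have hW : (⨆ i, V.map (toLin' (A i))).map e.toLinearMap =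
      ⨆ i, (V.map e.toLinearMap).map (toEuclideanLin (A i)) :=
    Submodule.map_iSup_map_of_comp_eq
      (fun _ => LinearMap.ext fun x => (toLpLin_toLp _ _ _ x).symm) V
  calc Module.finrank ℂ V = Module.finrank ℂ (V.map e.toLinearMap) := (e.finrank_map_eq V).symm
    _ ≤ Module.finrank ℂ
          (⨆ i, (V.map e.toLinearMap).map (toEuclideanLin (A i)) : Submodule ℂ _) :=
        Submodule.finrank_le_finrank_iSup_map h₁ h₂ _
    _ = Module.finrank ℂ (⨆ i, V.map (toLin' (A i)) : Submodule ℂ _) := by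
        rw [← hW, e.finrank_map_eq]
end

section
/- Let A be an n×n non-negative matrix with all row sums equal to 1 (row-stochastic), and let c_1,...,c_n be its column sums. If Σ_j (c_j - 1)² ≤ 1/(n+1), then the bipartite graph on the support of A has a perfect matching (equivalently, perm(A) > 0). -/
/-!
By Hall's theorem it suffices that every set `S` of columns meets the supports of at least `#S`
rows. If the supports of the columns in `S` lie in a set `T` of rows with `#T < #S`, then, since
rows are non-negative with sum `1`, the columns in `S` carry total mass at most `#T ≤ #S - 1`.
Their deviations `c_j - 1` therefore sum to at most `-1`, and Cauchy–Schwarz gives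
`1 ≤ #S · ∑_{j ∈ S} (c_j - 1)² ≤ n · ds(A) ≤ n / (n + 1) < 1`.
-/

open Finset

theorem one_le_card_mul_sum_sq_sub_one {ι : Type*} (x : ι → ℝ) (S : Finset ι)
    (h : ∑ j ∈ S, x j + 1 ≤ #S) : 1 ≤ (#S : ℝ) * ∑ j ∈ S, (x j - 1) ^ 2 := by
  have hdev : ∑ j ∈ S, (x j - 1) ≤ -1 := by
    rw [sum_sub_distrib, sum_const, nsmul_one]
    linarith
  calc (1 : ℝ) ≤ (∑ j ∈ S, (x j - 1)) ^ 2 := by nlinarith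
    _ ≤ #S * ∑ j ∈ S, (x j - 1) ^ 2 := sq_sum_le_card_mul_sum_sq

namespace Matrix

variable {ι : Type*} [Fintype ι]

noncomputable def colSupport (A : Matrix ι ι ℝ) (j : ι) : Finset ι :=
  univ.filter fun i => 0 < A i j

@[simp]
theorem mem_colSupport {A : Matrix ι ι ℝ} {i j : ι} : i ∈ A.colSupport j ↔ 0 < A i j := by
  simp [colSupport]

theorem exists_perm_pos_of_card_le_card_biUnion_colSupport [DecidableEq ι]
    (A : Matrix ι ι ℝ) (hall : ∀ S : Finset ι, #S ≤ #(S.biUnion A.colSupport)) :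
    ∃ σ : Equiv.Perm ι, ∀ i, 0 < A i (σ i) := by
  obtain ⟨f, hf_inj, hf_mem⟩ := (all_card_le_biUnion_card_iff_exists_injective _).1 hall
  let e := Equiv.ofBijective f (Finite.injective_iff_bijective.1 hf_inj)
  refine ⟨e.symm, fun i => ?_⟩
  have h := hf_mem (e.symm i)
  rwa [show f (e.symm i) = i from e.apply_symm_apply i, mem_colSupport] at h

theorem sum_colSum_le_card_biUnion_colSupport [DecidableEq ι] {A : Matrix ι ι ℝ}
    (hnonneg : ∀ i j, 0 ≤ A i j) (hrow : ∀ i, ∑ j, A i j ≤ 1) (S : Finset ι) :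
    ∑ j ∈ S, ∑ i, A i j ≤ #(S.biUnion A.colSupport) := by
  set T := S.biUnion A.colSupport
  have hzero : ∀ i ∉ T, ∀ j ∈ S, A i j = 0 := fun i hi j hj =>
    (hnonneg i j).eq_or_lt.elim Eq.symm fun hpos =>
      absurd (mem_biUnion.2 ⟨j, hj, mem_colSupport.2 hpos⟩) hi
  calc ∑ j ∈ S, ∑ i, A i j = ∑ i ∈ T, ∑ j ∈ S, A i j := by
        rw [sum_comm, sum_subset (subset_univ T) fun i _ hi => sum_eq_zero (hzero i hi)]
    _ ≤ ∑ _i ∈ T, (1 : ℝ) := sum_le_sum fun i _ =>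
        (sum_le_sum_of_subset_of_nonneg (subset_univ S) fun j _ _ => hnonneg i j).trans (hrow i)
    _ = #T := by simp

theorem card_le_card_biUnion_colSupport [DecidableEq ι] {A : Matrix ι ι ℝ}
    (hnonneg : ∀ i j, 0 ≤ A i j) (hrow : ∀ i, ∑ j, A i j ≤ 1)
    (hcol : (Fintype.card ι : ℝ) * ∑ j, ((∑ i, A i j) - 1) ^ 2 < 1) (S : Finset ι) :
    #S ≤ #(S.biUnion A.colSupport) := by
  by_contra! hlt
  have hmass : ∑ j ∈ S, ∑ i, A i j + 1 ≤ #S := by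
    have : ((#(S.biUnion A.colSupport) + 1 : ℕ) : ℝ) ≤ #S := by exact_mod_cast hlt
    push_cast at this
    linarith [sum_colSum_le_card_biUnion_colSupport hnonneg hrow S]
  have hsub : ∑ j ∈ S, ((∑ i, A i j) - 1) ^ 2 ≤ ∑ j, ((∑ i, A i j) - 1) ^ 2 :=
    sum_le_sum_of_subset_of_nonneg (subset_univ S) fun j _ _ => sq_nonneg _
  have hcard : (#S : ℝ) ≤ Fintype.card ι := by exact_mod_cast card_le_univ S
  have hS := one_le_card_mul_sum_sq_sub_one _ S hmass
  have := mul_le_mul hcard hsub (sum_nonneg fun j _ => sq_nonneg _) (Nat.cast_nonneg _)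
  linarith

end Matrix

theorem row_stochastic_near_doublyStochastic_has_matching {n : ℕ}
    (A : Matrix (Fin n) (Fin n) ℝ)
    (hnonneg : ∀ i j, 0 ≤ A i j)
    (hrow : ∀ i, ∑ j, A i j = 1)
    (hcol : ∑ j, ((∑ i, A i j) - 1) ^ 2 ≤ 1 / ((n : ℝ) + 1)) :
    ∃ σ : Equiv.Perm (Fin n), ∀ i, 0 < A i (σ i) := by
  have hdev : (Fintype.card (Fin n) : ℝ) * ∑ j, ((∑ i, A i j) - 1) ^ 2 < 1 := by
    have hn : (0 : ℝ) < n + 1 := by positivity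
    calc (Fintype.card (Fin n) : ℝ) * ∑ j, ((∑ i, A i j) - 1) ^ 2 ≤ n * (1 / ((n : ℝ) + 1)) := by
          rw [Fintype.card_fin]; gcongr
      _ < 1 := by rw [mul_one_div, div_lt_one hn]; linarith
  exact A.exists_perm_pos_of_card_le_card_biUnion_colSupport
    (A.card_le_card_biUnion_colSupport hnonneg (fun i => (hrow i).le) hdev)
end

section
/- Let A ∈ Ten(n,...,n) be a d-fold tensor (d ≥ 2) over ℂ with slice-rank strictly less than n. Then A lies in the null cone of the action of SL(n)^d: there is a sequence g^{(k)} = (g_1^{(k)},...,g_d^{(k)}) of tuples in SL(n,ℂ)^d with (g_1^{(k)} ⊗ ... ⊗ g_d^{(k)}) A → 0. -/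
open Filter

/-- The action of a tuple of `n × n` matrices `g = (g_1, ..., g_d)` on a `d`-fold tensor
`A ∈ (ℂ^n)^{⊗ d}`, represented as a function on index tuples:
`((g_1 ⊗ ⋯ ⊗ g_d) A)(x) = ∑_e (∏ i, (g_i)_{x_i, e_i}) A(e)`. -/
noncomputable def tensorAction {d n : ℕ} (g : Fin d → Matrix (Fin n) (Fin n) ℂ)
    (A : (Fin d → Fin n) → ℂ) : (Fin d → Fin n) → ℂ :=
  fun x => ∑ e : Fin d → Fin n, (∏ i, g i (x i) (e i)) * A e

/-- A tensor has slice-rank one if it is the product of a vector in some coordinate `j`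
with a tensor not depending on coordinate `j`. -/
def SliceRankOne {d n : ℕ} (B : (Fin d → Fin n) → ℂ) : Prop :=
  ∃ (j : Fin d) (v : Fin n → ℂ) (C : (Fin d → Fin n) → ℂ),
    (∀ x y : Fin d → Fin n, (∀ i, i ≠ j → x i = y i) → C x = C y) ∧
    ∀ x, B x = v (x j) * C x


/-!
Write `A = ∑ₜ vₜ ⊗_{jₜ} Cₜ` with `k < n` slices, `rᵢ` of them in coordinate `i`, so `∑ rᵢ = k`.
For each `i` pick `Mᵢ ∈ SL(n)` moving every `vₜ` with `jₜ = i` into the span of the first `rᵢ`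
basis vectors; then `(M • A)(x) = 0` unless `xᵢ < rᵢ` for some `i`. Now act by the one-parameter
subgroup `τ ↦ diag(τ^(rᵢ-n), …, τ^(rᵢ-n), τ^rᵢ, …, τ^rᵢ)` (`rᵢ` entries `τ^(rᵢ-n)`) of `SL(n)` in
each coordinate: it multiplies the surviving entries by `τ^w` with `w ≤ ∑ rᵢ - n = k - n < 0`,
so `(λ(τ) M) • A → 0` as `τ → ∞`.
-/

open Matrix Module Submodule Finset

lemma zpow_sum₀ {ι G : Type*} [CommGroupWithZero G] {a : G} (ha : a ≠ 0) (s : Finset ι)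
    (f : ι → ℤ) : a ^ (∑ i ∈ s, f i) = ∏ i ∈ s, a ^ f i := by
  classical
  induction s using Finset.induction_on with
  | empty => simp
  | insert i s hi ih => rw [sum_insert hi, prod_insert hi, zpow_add₀ ha, ih]

lemma Fintype.sum_apply_mul_eq_zero {ι α R : Type*} [Fintype ι] [DecidableEq ι] [Fintype α]
    [CommSemiring R] {j : ι} {φ : α → R} {P : (ι → α) → R}
    (hP : ∀ x y : ι → α, (∀ i, i ≠ j → x i = y i) → P x = P y) (hφ : ∑ a, φ a = 0) :
    ∑ e : ι → α, φ (e j) * P e = 0 := by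
  rcases isEmpty_or_nonempty α with hα | ⟨⟨a₀⟩⟩
  · have : Nonempty ι := ⟨j⟩
    simp
  let E := Equiv.funSplitAt j α
  rw [← E.symm.sum_comp, Fintype.sum_prod_type, sum_comm]
  refine Finset.sum_eq_zero fun e' _ => ?_
  have hPE : ∀ a, P (E.symm (a, e')) = P (E.symm (a₀, e')) := fun a =>
    hP _ _ fun i hi => by simp [E, Equiv.funSplitAt_symm_apply, dif_neg hi]
  simp only [hPE, E, Equiv.funSplitAt_symm_apply, dif_pos, ← sum_mul, hφ, zero_mul]

lemma Matrix.exists_det_smul_eq_one {K ι : Type*} [Field K] [IsAlgClosed K] [Fintype ι]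
    [DecidableEq ι] {M : Matrix ι ι K} (hM : M.det ≠ 0) : ∃ c : K, (c • M).det = 1 := by
  rcases isEmpty_or_nonempty ι with hι | hι
  · exact ⟨1, by simp⟩
  obtain ⟨c, hc⟩ := IsAlgClosed.exists_pow_nat_eq M.det⁻¹ (Fintype.card_pos (α := ι))
  exact ⟨c, by rw [det_smul, hc, inv_mul_cancel₀ hM]⟩

lemma exists_finrank_eq_and_apply_eq_zero_of_le {K : Type*} [Field K] {m n : ℕ} (hm : m ≤ n) :
    ∃ U : Submodule K (Fin n → K), finrank K U = m ∧ ∀ u ∈ U, ∀ l : Fin n, m ≤ l → u l = 0 := by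
  let b := Pi.basisFun K (Fin n) ∘ Fin.castLE hm
  have hb : LinearIndependent K b :=
    (Pi.basisFun K (Fin n)).linearIndependent.comp _ (Fin.castLE_injective hm)
  refine ⟨span K (Set.range b), ?_, fun u hu l hl => ?_⟩
  · rw [finrank_span_eq_card hb, Fintype.card_fin]
  suffices span K (Set.range b) ≤ LinearMap.ker (LinearMap.proj l) from this hu
  rw [span_le]
  rintro _ ⟨a, rfl⟩
  have hal : l ≠ Fin.castLE hm a := fun h => by
    have := congrArg Fin.val h
    simp only [Fin.val_castLE] at this
    omega
  simp [b, hal]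

lemma exists_det_eq_one_mulVec_apply_eq_zero {K : Type*} [Field K] [IsAlgClosed K] {n r : ℕ}
    (W : Submodule K (Fin n → K)) (hW : finrank K W ≤ r) :
    ∃ M : Matrix (Fin n) (Fin n) K, M.det = 1 ∧ ∀ w ∈ W, ∀ l : Fin n, r ≤ l → (M *ᵥ w) l = 0 := by
  obtain ⟨U, hUW, hU⟩ := exists_finrank_eq_and_apply_eq_zero_of_le (K := K)
    ((Submodule.finrank_le W).trans (finrank_fin_fun K).le)
  obtain ⟨g, hg⟩ := W.exists_linearEquiv_restrict_eq (LinearEquiv.ofFinrankEq W U hUW.symm)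
  let M₀ := LinearMap.toMatrix' (g : (Fin n → K) →ₗ[K] Fin n → K)
  have hM₀ : M₀.det ≠ 0 := by
    rw [LinearMap.det_toMatrix']
    exact (LinearEquiv.isUnit_det' g).ne_zero
  obtain ⟨c, hc⟩ := exists_det_smul_eq_one hM₀
  refine ⟨c • M₀, hc, fun w hw l hl => ?_⟩
  have hgw : g w ∈ U := hg ⟨w, hw⟩ ▸ (LinearEquiv.ofFinrankEq W U hUW.symm ⟨w, hw⟩).2
  rw [smul_mulVec, LinearMap.toMatrix'_mulVec, LinearEquiv.coe_coe, Pi.smul_apply,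
    hU _ hgw l (hW.trans hl), smul_zero]

section TensorAction

variable {d n : ℕ}

lemma tensorAction_mul (g h : Fin d → Matrix (Fin n) (Fin n) ℂ) (A : (Fin d → Fin n) → ℂ) :
    tensorAction (fun i => g i * h i) A = tensorAction g (tensorAction h A) := by
  funext x
  simp only [tensorAction, mul_apply, prod_univ_sum, Fintype.piFinset_univ, sum_mul, mul_sum,
    prod_mul_distrib]
  rw [sum_comm]
  exact sum_congr rfl fun e _ => sum_congr rfl fun f _ => by ring

lemma tensorAction_sum {k : ℕ} (g : Fin d → Matrix (Fin n) (Fin n) ℂ)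
    (B : Fin k → (Fin d → Fin n) → ℂ) :
    tensorAction g (∑ t, B t) = ∑ t, tensorAction g (B t) := by
  funext x
  simp only [tensorAction, Finset.sum_apply, mul_sum]
  exact sum_comm

lemma tensorAction_diagonal_apply (δ : Fin d → Fin n → ℂ) (A : (Fin d → Fin n) → ℂ)
    (x : Fin d → Fin n) :
    tensorAction (fun i => diagonal (δ i)) A x = (∏ i, δ i (x i)) * A x := by
  refine (sum_eq_single x (fun e _ hne => ?_) (by simp)).trans (by simp)
  obtain ⟨i, hi⟩ := Function.ne_iff.1 hne
  exact mul_eq_zero_of_left (prod_eq_zero (mem_univ i) (diagonal_apply_ne (δ i) (Ne.symm hi))) _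

lemma tensorAction_apply_eq_zero_of_mulVec_eq_zero (g : Fin d → Matrix (Fin n) (Fin n) ℂ)
    {B : (Fin d → Fin n) → ℂ} {j : Fin d} {v : Fin n → ℂ} {C : (Fin d → Fin n) → ℂ}
    (hC : ∀ x y : Fin d → Fin n, (∀ i, i ≠ j → x i = y i) → C x = C y)
    (hB : ∀ x, B x = v (x j) * C x) {x : Fin d → Fin n} (hv : (g j *ᵥ v) (x j) = 0) :
    tensorAction g B x = 0 := by
  have hsplit : ∀ e : Fin d → Fin n, (∏ i, g i (x i) (e i)) * B e =
      g j (x j) (e j) * v (e j) * ((∏ i ∈ univ.erase j, g i (x i) (e i)) * C e) := fun e => by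
    rw [hB, ← mul_prod_erase univ _ (mem_univ j)]
    ring
  simp only [tensorAction, hsplit]
  refine Fintype.sum_apply_mul_eq_zero (φ := fun a => g j (x j) a * v a) (fun e e' he => ?_) hv
  rw [hC e e' he, prod_congr rfl fun i hi => by rw [he i (ne_of_mem_erase hi)]]

end TensorAction


def contractingWeight (n r : ℕ) (l : Fin n) : ℤ := if (l : ℕ) < r then r - n else r

lemma sum_contractingWeight {n r : ℕ} (hr : r ≤ n) : ∑ l, contractingWeight n r l = 0 := by
  have hlt : #{l : Fin n | (l : ℕ) < r} = r := by rw [Fin.card_filter_val_lt, min_eq_right hr]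
  have hge : #{l : Fin n | ¬ (l : ℕ) < r} = n - r := by
    rw [filter_not, card_sdiff_of_subset (filter_subset _ _), hlt, card_univ, Fintype.card_fin]
  simp only [contractingWeight, sum_ite, sum_const, hlt, hge, nsmul_eq_mul]
  push_cast [hr]
  ring

lemma sum_contractingWeight_neg {ι : Type*} [Fintype ι] {n : ℕ} {r : ι → ℕ} (hr : ∑ i, r i < n)
    {x : ι → Fin n} {j : ι} (hj : (x j : ℕ) < r j) : ∑ i, contractingWeight n (r i) (x i) < 0 := by
  classical
  have hle : ∑ i ∈ univ.erase j, contractingWeight n (r i) (x i) ≤ ∑ i ∈ univ.erase j, (r i : ℤ) :=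
    sum_le_sum fun i _ => by unfold contractingWeight; split_ifs <;> omega
  rw [← add_sum_erase _ _ (mem_univ j), contractingWeight, if_pos hj]
  have hsplit := add_sum_erase univ (fun i => (r i : ℤ)) (mem_univ j)
  have hrn : ∑ i, (r i : ℤ) < n := by exact_mod_cast hr
  omega

noncomputable def contractingDiag (n r : ℕ) (τ : ℂ) : Matrix (Fin n) (Fin n) ℂ :=
  diagonal fun l => τ ^ contractingWeight n r l

lemma det_contractingDiag {n r : ℕ} (hr : r ≤ n) {τ : ℂ} (hτ : τ ≠ 0) :
    (contractingDiag n r τ).det = 1 := by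
  rw [contractingDiag, det_diagonal, ← zpow_sum₀ hτ, sum_contractingWeight hr, zpow_zero]

lemma tensorAction_contractingDiag_apply {d n : ℕ} (r : Fin d → ℕ) {τ : ℂ} (hτ : τ ≠ 0)
    (A : (Fin d → Fin n) → ℂ) (x : Fin d → Fin n) :
    tensorAction (fun i => contractingDiag n (r i) τ) A x =
      τ ^ (∑ i, contractingWeight n (r i) (x i)) * A x := by
  rw [zpow_sum₀ hτ]
  exact tensorAction_diagonal_apply _ A x

lemma tendsto_natCast_add_one_zpow_of_neg {s : ℤ} (hs : s < 0) :
    Tendsto (fun m : ℕ => ((m : ℂ) + 1) ^ s) atTop (nhds 0) := by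
  rw [tendsto_zero_iff_norm_tendsto_zero]
  have hnorm : ∀ m : ℕ, ‖((m : ℂ) + 1) ^ s‖ = ((m + 1 : ℕ) : ℝ) ^ s := fun m => by
    rw [norm_zpow]; norm_cast
  simp only [hnorm]
  exact (tendsto_zpow_atTop_zero hs).comp
    (tendsto_natCast_atTop_atTop.comp (tendsto_add_atTop_nat 1))

theorem sliceRank_lt_implies_nullcone_general {d n : ℕ}
    (A : (Fin d → Fin n) → ℂ)
    (hsr : ∃ k : ℕ, k < n ∧ ∃ B : Fin k → ((Fin d → Fin n) → ℂ),
      (∀ i, SliceRankOne (B i)) ∧ A = ∑ i, B i) :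
    ∃ g : ℕ → Fin d → Matrix (Fin n) (Fin n) ℂ,
      (∀ k i, (g k i).det = 1) ∧
      Tendsto (fun k => tensorAction (g k) A) atTop (nhds 0) := by
  obtain ⟨k, hk, B, hB, rfl⟩ := hsr
  choose j v C hC hBv using hB
  let r : Fin d → ℕ := fun i => Fintype.card {t // j t = i}
  have hr : ∑ i, r i = k := by
    simpa using (Fintype.card_sigma (α := fun i => {t // j t = i})).symm.trans
      (Fintype.card_congr (Equiv.sigmaFiberEquiv j))
  have hrk : ∑ i, r i < n := hr ▸ hk
  have hrn : ∀ i, r i ≤ n := fun i => (single_le_sum (by simp) (mem_univ i)).trans hrk.le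
  have hM : ∀ i, ∃ M : Matrix (Fin n) (Fin n) ℂ, M.det = 1 ∧
      ∀ t, j t = i → ∀ l : Fin n, r i ≤ l → (M *ᵥ v t) l = 0 := fun i => by
    obtain ⟨M, hdet, hW⟩ := exists_det_eq_one_mulVec_apply_eq_zero _
      (finrank_range_le_card (R := ℂ) fun t : {t // j t = i} => v t)
    exact ⟨M, hdet, fun t ht => hW _ (subset_span ⟨⟨t, ht⟩, rfl⟩)⟩
  choose M hMdet hMv using hM
  have hτ : ∀ m : ℕ, (m : ℂ) + 1 ≠ 0 := fun m => by exact_mod_cast m.succ_ne_zero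
  refine ⟨fun m i => contractingDiag n (r i) (m + 1) * M i, fun m i => ?_,
    tendsto_pi_nhds.2 fun x => ?_⟩
  · rw [det_mul, det_contractingDiag (hrn i) (hτ m), hMdet, one_mul]
  simp only [tensorAction_mul, tensorAction_contractingDiag_apply r (hτ _)]
  by_cases hx : ∃ i, (x i : ℕ) < r i
  · obtain ⟨i, hi⟩ := hx
    simpa using (tendsto_natCast_add_one_zpow_of_neg
      (sum_contractingWeight_neg hrk hi)).mul_const (tensorAction M (∑ t, B t) x)
  simp only [not_exists, not_lt] at hx
  have hzero : tensorAction M (∑ t, B t) x = 0 := by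
    rw [tensorAction_sum, Finset.sum_apply]
    exact sum_eq_zero fun t _ => tensorAction_apply_eq_zero_of_mulVec_eq_zero M (hC t) (hBv t)
      (hMv _ t rfl _ (hx _))
  simp [hzero]

theorem sliceRank_lt_implies_nullcone {d n : ℕ} (hd : 2 ≤ d)
    (A : (Fin d → Fin n) → ℂ)
    (hsr : ∃ k : ℕ, k < n ∧ ∃ B : Fin k → ((Fin d → Fin n) → ℂ),
      (∀ i, SliceRankOne (B i)) ∧ A = ∑ i, B i) :
    ∃ g : ℕ → Fin d → Matrix (Fin n) (Fin n) ℂ,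
      (∀ k i, (g k i).det = 1) ∧
      Tendsto (fun k => tensorAction (g k) A) atTop (nhds 0) :=
  sliceRank_lt_implies_nullcone_general A hsr
end
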